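/- Consider the ODE system ż₁ = -k₁ z₁ + z₂, ż₂ = -k₂ z₂ + θ̃ + ν, θ̃' = -z₂, η̇ = S(p_u - p_CoM)(u_n + ν) + S(p_θ - p_CoM)θ, with k₁, k₂ positive definite. If at every time t the input ν(t) satisfies (z₂ᵀ + ηᵀ S(p_u - p_CoM)) ν ≤ -ηᵀ(S(p_u - p_CoM) u_n + S(p_θ - p_CoM)θ), then V = z₁ᵀz₁ + z₂ᵀz₂ + θ̃ᵀθ̃ + ηᵀη is non-increasing along trajectories provided z₁ᵀz₂ ≤ z₁ᵀk₁z₁ + z₂ᵀk₂z₂. -/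

import Mathlib

open Matrix

/-- The cross-product (hat) matrix `S x`. -/
def skewMat (x : Fin 3 → ℝ) : Matrix (Fin 3) (Fin 3) ℝ :=
  !![0, -x 2, x 1; x 2, 0, -x 0; -x 1, x 0, 0]

/-!
Along trajectories `V̇ / 2 = z₁ᵀż₁ + z₂ᵀż₂ + θ̃ᵀθ̃' + ηᵀη̇`. The coupling terms `± z₂ᵀθ̃`
cancel, the remaining `z`-terms `z₁ᵀz₂ - z₁ᵀk₁z₁ - z₂ᵀk₂z₂` are nonpositive by assumption, and
the terms containing `ν`, `u_n` and `θ` add up to something nonpositive by the stabilizing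
inequality. So `V̇ ≤ 0` everywhere and `V` is antitone.
-/

section Derivatives

variable {𝕜 ι : Type*} [NontriviallyNormedField 𝕜] [Fintype ι]
  {f g : 𝕜 → ι → 𝕜} {f' g' : ι → 𝕜} {t : 𝕜}

theorem HasDerivAt.dotProduct (hf : HasDerivAt f f' t) (hg : HasDerivAt g g' t) :
    HasDerivAt (fun t => f t ⬝ᵥ g t) (f' ⬝ᵥ g t + f t ⬝ᵥ g') t := by
  simp only [_root_.dotProduct, ← Finset.sum_add_distrib]
  exact HasDerivAt.fun_sum fun i _ => (hasDerivAt_pi.mp hf i).mul (hasDerivAt_pi.mp hg i)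

theorem HasDerivAt.dotProduct_self (hf : HasDerivAt f f' t) :
    HasDerivAt (fun t => f t ⬝ᵥ f t) (2 * (f t ⬝ᵥ f')) t :=
  (hf.dotProduct hf).congr_deriv <| by rw [dotProduct_comm f', two_mul]

end Derivatives

theorem closedLoop_lyapunov_rate_nonpos {ι : Type*} [Fintype ι]
    (k₁ k₂ A : Matrix ι ι ℝ) (z₁ z₂ θt η ν u w : ι → ℝ)
    (hν : z₂ ⬝ᵥ ν + η ⬝ᵥ (A *ᵥ ν) ≤ -(η ⬝ᵥ (A *ᵥ u + w)))
    (hquad : z₁ ⬝ᵥ z₂ ≤ z₁ ⬝ᵥ (k₁ *ᵥ z₁) + z₂ ⬝ᵥ (k₂ *ᵥ z₂)) :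
    z₁ ⬝ᵥ (-(k₁ *ᵥ z₁) + z₂) + z₂ ⬝ᵥ (-(k₂ *ᵥ z₂) + θt + ν) + θt ⬝ᵥ -z₂
      + η ⬝ᵥ (A *ᵥ (u + ν) + w) ≤ 0 := by
  simp only [dotProduct_add, dotProduct_neg, mulVec_add] at hν ⊢
  rw [dotProduct_comm θt z₂]
  linarith

theorem lyapunov_nonincreasing_stabilizing_inequality_general
    (k₁ k₂ : Matrix (Fin 3) (Fin 3) ℝ)
    (z₁ z₂ θt η ν un pu pc pth : ℝ → Fin 3 → ℝ) (θ : Fin 3 → ℝ)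
    (hz₁ : ∀ t, HasDerivAt z₁ (-(k₁ *ᵥ z₁ t) + z₂ t) t)
    (hz₂ : ∀ t, HasDerivAt z₂ (-(k₂ *ᵥ z₂ t) + θt t + ν t) t)
    (hθ : ∀ t, HasDerivAt θt (-(z₂ t)) t)
    (hη : ∀ t, HasDerivAt η
      ((skewMat (pu t - pc t)) *ᵥ (un t + ν t)
        + (skewMat (pth t - pc t)) *ᵥ θ) t)
    (hν : ∀ t, z₂ t ⬝ᵥ ν t + η t ⬝ᵥ ((skewMat (pu t - pc t)) *ᵥ ν t) ≤
      -(η t ⬝ᵥ ((skewMat (pu t - pc t)) *ᵥ un t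
        + (skewMat (pth t - pc t)) *ᵥ θ)))
    (hquad : ∀ t, z₁ t ⬝ᵥ z₂ t ≤
      z₁ t ⬝ᵥ (k₁ *ᵥ z₁ t) + z₂ t ⬝ᵥ (k₂ *ᵥ z₂ t)) :
    Antitone (fun t => z₁ t ⬝ᵥ z₁ t + z₂ t ⬝ᵥ z₂ t + θt t ⬝ᵥ θt t
      + η t ⬝ᵥ η t) := by
  have hV t := (((hz₁ t).dotProduct_self.add (hz₂ t).dotProduct_self).add
    (hθ t).dotProduct_self).add (hη t).dotProduct_self
  refine antitone_of_hasDerivAt_nonpos hV fun t => ?_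
  have hrate := closedLoop_lyapunov_rate_nonpos k₁ k₂ (skewMat (pu t - pc t))
    (z₁ t) (z₂ t) (θt t) (η t) (ν t) (un t) _ (hν t) (hquad t)
  rw [Pi.zero_apply]
  linarith

/-- Lemma 1: along the closed-loop dynamics
`ż₁ = -k₁z₁ + z₂`, `ż₂ = -k₂z₂ + θ̃ + ν`, `θ̃' = -z₂`,
`η̇ = S(p_u - p_CoM)(u_n + ν) + S(p_θ - p_CoM)θ`,
if `ν` satisfies the stabilizing inequality
`(z₂ᵀ + ηᵀ S(p_u - p_CoM)) ν ≤ -ηᵀ(S(p_u - p_CoM) u_n + S(p_θ - p_CoM)θ)`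
at every time, and `z₁ᵀz₂ ≤ z₁ᵀk₁z₁ + z₂ᵀk₂z₂`, then
`V = z₁ᵀz₁ + z₂ᵀz₂ + θ̃ᵀθ̃ + ηᵀη` is non-increasing. -/
theorem lyapunov_nonincreasing_stabilizing_inequality
    (k₁ k₂ : Matrix (Fin 3) (Fin 3) ℝ)
    (hk₁ : k₁.PosDef) (hk₂ : k₂.PosDef)
    (z₁ z₂ θt η ν un pu pc pth : ℝ → Fin 3 → ℝ) (θ : Fin 3 → ℝ)
    (hz₁ : ∀ t, HasDerivAt z₁ (-(k₁ *ᵥ z₁ t) + z₂ t) t)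
    (hz₂ : ∀ t, HasDerivAt z₂ (-(k₂ *ᵥ z₂ t) + θt t + ν t) t)
    (hθ : ∀ t, HasDerivAt θt (-(z₂ t)) t)
    (hη : ∀ t, HasDerivAt η
      ((skewMat (pu t - pc t)) *ᵥ (un t + ν t)
        + (skewMat (pth t - pc t)) *ᵥ θ) t)
    (hν : ∀ t, z₂ t ⬝ᵥ ν t + η t ⬝ᵥ ((skewMat (pu t - pc t)) *ᵥ ν t) ≤
      -(η t ⬝ᵥ ((skewMat (pu t - pc t)) *ᵥ un t
        + (skewMat (pth t - pc t)) *ᵥ θ)))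
    (hquad : ∀ t, z₁ t ⬝ᵥ z₂ t ≤
      z₁ t ⬝ᵥ (k₁ *ᵥ z₁ t) + z₂ t ⬝ᵥ (k₂ *ᵥ z₂ t)) :
    Antitone (fun t => z₁ t ⬝ᵥ z₁ t + z₂ t ⬝ᵥ z₂ t + θt t ⬝ᵥ θt t
      + η t ⬝ᵥ η t) :=
  lyapunov_nonincreasing_stabilizing_inequality_general k₁ k₂ z₁ z₂ θt η ν un pu pc pth θ hz₁ hz₂ hθ
    hη hν hquad
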